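/- Let v(x, y) = −4xy·log(x² + y²) + 2(x² − y²)·(π/2 − 2·arctan(y/x)) − π(x² + y²), defined for (x, y) ∈ ℝ² with x ≠ 0. Then v is twice continuously differentiable on {x ≠ 0} and satisfies ∂²v/∂x² + ∂²v/∂y² = −4π at every point with x ≠ 0. -/

import Mathlib

/-!
Direct computation. The derivatives of the logarithmic and arctangent terms share the denominator
`x² + y²`, and the rational parts cancel, leaving
`v_x = −4y log(x²+y²) − 8x arctan(y/x) − 4y` and
`v_y = −4x log(x²+y²) − 4y (π/2 − 2 arctan(y/x)) − 2πy − 4x`.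
Differentiating once more, the rational parts cancel again: `v_xx = −8 arctan(y/x)` and
`v_yy = −4π + 8 arctan(y/x)`.
-/

open Real

noncomputable section

def vfun (x y : ℝ) : ℝ :=
  -4 * x * y * Real.log (x ^ 2 + y ^ 2)
    + 2 * (x ^ 2 - y ^ 2) * (π / 2 - 2 * Real.arctan (y / x))
    - π * (x ^ 2 + y ^ 2)

theorem contDiffOn_vfun {n : WithTop ℕ∞} :
    ContDiffOn ℝ n (fun p : ℝ × ℝ => vfun p.1 p.2) {p : ℝ × ℝ | p.1 ≠ 0} := by
  have hfst : ContDiffOn ℝ n (fun p : ℝ × ℝ => p.1) {p | p.1 ≠ 0} := contDiff_fst.contDiffOn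
  have hsnd : ContDiffOn ℝ n (fun p : ℝ × ℝ => p.2) {p | p.1 ≠ 0} := contDiff_snd.contDiffOn
  have hsq := (hfst.pow 2).add (hsnd.pow 2)
  have hlog := hsq.log fun p (hp : p.1 ≠ 0) => by positivity
  have harctan := contDiff_arctan.comp_contDiffOn (hsnd.div hfst fun p hp => hp)
  exact ((((contDiffOn_const.mul hfst).mul hsnd).mul hlog).add
    ((contDiffOn_const.mul ((hfst.pow 2).sub (hsnd.pow 2))).mul
      (contDiffOn_const.sub (contDiffOn_const.mul harctan)))).sub (contDiffOn_const.mul hsq)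

theorem hasDerivAt_arctan_const_div (y : ℝ) {s : ℝ} (hs : s ≠ 0) :
    HasDerivAt (fun t => Real.arctan (y / t)) (-y / (s ^ 2 + y ^ 2)) s := by
  have hdiv : HasDerivAt (fun t => y / t) (-y / s ^ 2) s := by
    simpa [div_eq_mul_inv, neg_div] using (hasDerivAt_inv hs).const_mul y
  convert hdiv.arctan using 1
  field_simp

theorem hasDerivAt_arctan_div_const {x : ℝ} (hx : x ≠ 0) (s : ℝ) :
    HasDerivAt (fun t => Real.arctan (t / x)) (x / (x ^ 2 + s ^ 2)) s := by
  convert ((hasDerivAt_id' s).div_const x).arctan using 1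
  field_simp

theorem hasDerivAt_vfun_fst (y : ℝ) {s : ℝ} (hs : s ≠ 0) :
    HasDerivAt (fun t => vfun t y)
      (-4 * y * Real.log (s ^ 2 + y ^ 2) - 8 * s * Real.arctan (y / s) - 4 * y) s := by
  have hr : s ^ 2 + y ^ 2 ≠ 0 := by positivity
  have hsq := (hasDerivAt_pow 2 s).add_const (y ^ 2)
  have H := (((((hasDerivAt_id' s).const_mul (-4)).mul_const y).mul (hsq.log hr)).add
    ((((hasDerivAt_pow 2 s).sub_const (y ^ 2)).const_mul 2).mul
      (((hasDerivAt_arctan_const_div y hs).const_mul 2).const_sub (π / 2)))).sub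
    (hsq.const_mul π)
  refine H.congr_deriv ?_
  field_simp
  ring

theorem hasDerivAt_vfun_snd {x : ℝ} (hx : x ≠ 0) (s : ℝ) :
    HasDerivAt (fun t => vfun x t)
      (-4 * x * Real.log (x ^ 2 + s ^ 2)
        - 4 * s * (π / 2 - 2 * Real.arctan (s / x)) - 2 * π * s - 4 * x) s := by
  have hr : x ^ 2 + s ^ 2 ≠ 0 := by positivity
  have hsq := (hasDerivAt_pow 2 s).const_add (x ^ 2)
  have H := ((((hasDerivAt_id' s).const_mul (-4 * x)).mul (hsq.log hr)).add
    ((((hasDerivAt_pow 2 s).const_sub (x ^ 2)).const_mul 2).mul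
      (((hasDerivAt_arctan_div_const hx s).const_mul 2).const_sub (π / 2)))).sub
    (hsq.const_mul π)
  refine H.congr_deriv ?_
  field_simp
  ring

theorem hasDerivAt_deriv_vfun_fst (y : ℝ) {x : ℝ} (hx : x ≠ 0) :
    HasDerivAt (fun s => deriv (fun t => vfun t y) s) (-8 * Real.arctan (y / x)) x := by
  have hr : x ^ 2 + y ^ 2 ≠ 0 := by positivity
  have H := ((((hasDerivAt_pow 2 x).add_const (y ^ 2)).log hr).const_mul (-4 * y)).sub
    (((hasDerivAt_id' x).const_mul 8).mul (hasDerivAt_arctan_const_div y hx)) |>.sub_const (4 * y)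
  refine (H.congr_deriv ?_).congr_of_eventuallyEq ?_
  · field_simp
    ring
  · filter_upwards [eventually_ne_nhds hx] with s hs
    exact (hasDerivAt_vfun_fst y hs).deriv

theorem hasDerivAt_deriv_vfun_snd {x : ℝ} (hx : x ≠ 0) (y : ℝ) :
    HasDerivAt (fun s => deriv (fun t => vfun x t) s) (-4 * π + 8 * Real.arctan (y / x)) y := by
  have hr : x ^ 2 + y ^ 2 ≠ 0 := by positivity
  have H := (((((hasDerivAt_pow 2 y).const_add (x ^ 2)).log hr).const_mul (-4 * x)).sub
    (((hasDerivAt_id' y).const_mul 4).mul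
      (((hasDerivAt_arctan_div_const hx y).const_mul 2).const_sub (π / 2)))).sub
    ((hasDerivAt_id' y).const_mul (2 * π)) |>.sub_const (4 * x)
  refine (H.congr_deriv ?_).congr_of_eventuallyEq
    (.of_forall fun s => (hasDerivAt_vfun_snd hx s).deriv)
  field_simp
  ring

/-- `v` is `C²` on `{x ≠ 0}` and satisfies `Δv = −4π` there. -/
theorem statement14 :
    ContDiffOn ℝ 2 (fun p : ℝ × ℝ => vfun p.1 p.2) {p : ℝ × ℝ | p.1 ≠ 0} ∧
    ∀ x y : ℝ, x ≠ 0 →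
      deriv (fun s => deriv (fun t => vfun t y) s) x
        + deriv (fun s => deriv (fun t => vfun x t) s) y = -4 * π := by
  refine ⟨contDiffOn_vfun, fun x y hx => ?_⟩
  rw [(hasDerivAt_deriv_vfun_fst y hx).deriv, (hasDerivAt_deriv_vfun_snd hx y).deriv]
  ring
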